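/- Let N be an odd prime and let P be a Laurent polynomial in Z[q, q^{-1}] that is invariant under the substitution q ↦ -q. If P vanishes at a primitive 2N-th root of unity ω, then P is divisible in Z[q, q^{-1}] by U_N = q^{-N+1} + q^{-N+3} + ... + q^{N-1}, and the quotient is again invariant under q ↦ -q. -/

import Mathlib

open LaurentPolynomial

/-- The quantum integer `U_N = q^{-N+1} + q^{-N+3} + ⋯ + q^{N-1}`. -/
noncomputable def qint (N : ℕ) : LaurentPolynomial ℤ :=
  ∑ k ∈ Finset.range N, T (2 * (k : ℤ) - N + 1)

/-- Evaluation of an integer Laurent polynomial at a nonzero complex number. -/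
noncomputable def leval (z : ℂ) (P : LaurentPolynomial ℤ) : ℂ :=
  P.coeff.sum fun n a => (a : ℂ) * z ^ n

/-- A Laurent polynomial is *even* (invariant under `q ↦ -q`) iff all its
odd-degree coefficients vanish. -/
def IsEvenLP (P : LaurentPolynomial ℤ) : Prop := ∀ n : ℤ, Odd n → P.coeff n = 0

/-! Writing the even `P` as `R(q²)`, the Laurent polynomial `R` vanishes at the primitive
`N`-th root of unity `ω²`, so it is divisible by the cyclotomic polynomial `Φ_N`, the minimal
polynomial of `ω²` over `ℤ`. For prime `N`, `Φ_N(q²) = 1 + q² + ⋯ + q^{2N-2} = q^{N-1} U_N`,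
and as `N - 1` is even the monomial `q^{N-1}` is itself a function of `q²`. -/

namespace LaurentPolynomial

variable {R S : Type*} [CommSemiring R]

variable (R) in
/-- The substitution `T ↦ T ^ k`, the Laurent analogue of `Polynomial.expand`. -/
noncomputable def expand (k : ℤ) : R[T;T⁻¹] →+* R[T;T⁻¹] :=
  AddMonoidAlgebra.mapDomainRingHom R (AddMonoidHom.mulLeft k)

theorem expand_T (k n : ℤ) : expand R k (T n) = T (k * n) :=
  AddMonoidAlgebra.mapDomain_single

theorem expand_C_mul_T (k n : ℤ) (r : R) : expand R k (C r * T n) = C r * T (k * n) := by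
  simp only [← single_eq_C_mul_T]
  exact AddMonoidAlgebra.mapDomain_single

theorem eval₂_expand [CommSemiring S] (f : R →+* S) (x : Sˣ) (k : ℤ) (P : R[T;T⁻¹]) :
    eval₂ f x (expand R k P) = eval₂ f (x ^ k) P := by
  induction P using LaurentPolynomial.induction_on' with
  | add P Q hP hQ => simp only [map_add, hP, hQ]
  | C_mul_T n r => simp [expand_C_mul_T, zpow_mul]

end LaurentPolynomial

theorem isEvenLP_expand_two (P : ℤ[T;T⁻¹]) : IsEvenLP (expand ℤ 2 P) := by
  intro n hn
  apply Finsupp.mapDomain_of_notMem_range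
  rintro ⟨m, rfl⟩
  exact Int.not_odd_iff_even.mpr ⟨m, two_mul m⟩ hn

theorem IsEvenLP.exists_eq_expand_two {P : ℤ[T;T⁻¹]} (hP : IsEvenLP P) :
    ∃ R, P = expand ℤ 2 R := by
  have hinj : Function.Injective (fun n : ℤ => 2 * n) := fun a b h => by simpa using h
  refine ⟨AddMonoidAlgebra.comapDomain _ hinj P,
    (AddMonoidAlgebra.mapDomain_comapDomain (fun n hn => ?_) hinj).symm⟩
  obtain ⟨m, rfl⟩ :=
    Int.not_odd_iff_even.mp fun hodd => Finsupp.mem_support_iff.mp hn (hP n hodd)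
  exact ⟨m, two_mul m⟩

theorem leval_eq_eval₂ {z : ℂ} (hz : z ≠ 0) (P : ℤ[T;T⁻¹]) :
    leval z P = eval₂ (algebraMap ℤ ℂ) (Units.mk0 z hz) P := by
  rw [show leval z P = P.smeval (Units.mk0 z hz) from
    Finsupp.sum_congr fun n _ => by simp [zsmul_eq_mul]]
  induction P using LaurentPolynomial.induction_on' with
  | add P Q hP hQ => rw [smeval_add, map_add, hP, hQ]
  | C_mul_T n r => rw [smeval_C_mul_T_n, eval₂_C_mul_T, zsmul_eq_mul]; rfl

theorem toLaurent_cyclotomic_dvd_of_eval₂_eq_zero {K : Type*} [Field K] [CharZero K] {N : ℕ}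
    (hN : 0 < N) {x : Kˣ} (hx : IsPrimitiveRoot (x : K) N) {P : ℤ[T;T⁻¹]}
    (hP : eval₂ (algebraMap ℤ K) x P = 0) : (Polynomial.cyclotomic N ℤ).toLaurent ∣ P := by
  obtain ⟨n, p, hp⟩ := P.exists_T_pow
  rw [← (isUnit_T (n : ℤ)).dvd_mul_right, ← hp]
  refine map_dvd Polynomial.toLaurent ?_
  rw [Polynomial.cyclotomic_eq_minpoly hx hN]
  refine minpoly.isIntegrallyClosed_dvd (hx.isIntegral hN) ?_
  rw [Polynomial.aeval_def, ← eval₂_toLaurent (x := x), hp, map_mul, hP, zero_mul]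

theorem qint_eq_expand_two (m : ℕ) :
    qint (2 * m + 1) =
      expand ℤ 2 ((∑ i ∈ Finset.range (2 * m + 1), Polynomial.X ^ i).toLaurent * T (-m)) := by
  rw [qint, map_sum, Finset.sum_mul, map_sum]
  refine Finset.sum_congr rfl fun k _ => ?_
  rw [Polynomial.toLaurent_X_pow, ← T_add, expand_T]
  push_cast
  ring_nf

/-- Let `N` be an odd prime and `P ∈ ℤ[q,q⁻¹]` even.  If `P` vanishes at a
primitive `2N`-th root of unity `ω`, then `P` is divisible by `U_N` with an
even quotient. -/
theorem stmt_4 (N : ℕ) (hN : N.Prime) (hodd : Odd N) (ω : ℂ)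
    (hω : IsPrimitiveRoot ω (2 * N)) (P : LaurentPolynomial ℤ)
    (hP : IsEvenLP P) (hPω : leval ω P = 0) :
    ∃ Q : LaurentPolynomial ℤ, P = qint N * Q ∧ IsEvenLP Q := by
  have := Fact.mk hN
  obtain ⟨R, rfl⟩ := hP.exists_eq_expand_two
  have hω0 : ω ≠ 0 := hω.ne_zero (by simp [hN.ne_zero])
  have hω2 : IsPrimitiveRoot ((Units.mk0 ω hω0 ^ (2 : ℤ) : ℂˣ) : ℂ) N := by
    simpa using hω.pow (by positivity [hN.pos]) rfl
  rw [leval_eq_eval₂ hω0, eval₂_expand] at hPω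
  obtain ⟨S, rfl⟩ := toLaurent_cyclotomic_dvd_of_eval₂_eq_zero hN.pos hω2 hPω
  obtain ⟨m, rfl⟩ := hodd
  refine ⟨expand ℤ 2 (T m * S), ?_, isEvenLP_expand_two _⟩
  rw [Polynomial.cyclotomic_prime, qint_eq_expand_two, ← map_mul, mul_assoc,
    ← mul_assoc (T _), ← T_add, neg_add_cancel, T_zero, one_mul]
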